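/- arXiv:1601.05988 — 8 statements merged into one kernel-verified Lean document; each statement's English description precedes it below -/
import Mathlib

section
/- Let C be a convex subset of ℝ^n and f : ℝ^n → ℝ^m a differentiable function. Suppose that for every nonzero sign vector s ∈ {-1,0,1}^n \ {0} there exists a differentiable function π : ℝ^m → ℝ such that for every coordinate i with s_i ≠ 0, the partial derivative ∂(π ∘ f)/∂x_i is strictly positive on all of C if s_i = 1 and strictly negative on all of C if s_i = -1. Then f restricted to C is injective. -/
/-! If `f x = f y` with `x ≠ y`, let `s` be the sign vector of `v = y - x` and `π` the function
it provides. On `C` the directional derivative of `π ∘ f` along `v` is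
`∑ i, v i * ∂ᵢ(π ∘ f) > 0`, every nonzero term being positive by the choice of `s`; by the mean
value theorem on the segment `[x, y] ⊆ C`, `π (f x) < π (f y)`, a contradiction. -/

theorem LinearMap.apply_pos_of_mul_apply_single_pos {ι R : Type*} [Fintype ι] [DecidableEq ι]
    [CommRing R] [LinearOrder R] [IsStrictOrderedRing R] (L : (ι → R) →ₗ[R] R) {v : ι → R}
    (hv : v ≠ 0) (hL : ∀ i, v i ≠ 0 → 0 < v i * L (Pi.single i 1)) : 0 < L v := by
  obtain ⟨i₀, hi₀⟩ := Function.ne_iff.1 hv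
  have hsum : L v = ∑ i, v i * L (Pi.single i 1) := by
    conv_lhs => rw [pi_eq_sum_univ' v]
    simp only [map_sum, map_smul, smul_eq_mul]
  have hnonneg (i : ι) : 0 ≤ v i * L (Pi.single i 1) := by
    by_cases hi : v i = 0
    · simp [hi]
    · exact (hL i hi).le
  rw [hsum]
  exact Finset.sum_pos' (fun i _ => hnonneg i) ⟨i₀, Finset.mem_univ _, hL i₀ hi₀⟩

theorem Convex.lt_of_fderiv_apply_sub_pos {E : Type*} [NormedAddCommGroup E] [NormedSpace ℝ E]
    {C : Set E} (hC : Convex ℝ C) {g : E → ℝ} (hg : ∀ p ∈ C, DifferentiableAt ℝ g p)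
    {x y : E} (hx : x ∈ C) (hy : y ∈ C) (hpos : ∀ p ∈ C, 0 < fderiv ℝ g p (y - x)) :
    g x < g y := by
  obtain ⟨z, hz, hgz⟩ := domain_mvt (fun p hp => (hg p hp).hasFDerivAt.hasFDerivWithinAt) hC hx hy
  have := hpos z (hC.segment_subset hx hy hz)
  linarith

theorem stmt1 {n m : ℕ} (C : Set (Fin n → ℝ)) (hC : Convex ℝ C)
    (f : (Fin n → ℝ) → (Fin m → ℝ)) (hf : Differentiable ℝ f)
    (h : ∀ s : Fin n → ℤ, (∀ i, s i = -1 ∨ s i = 0 ∨ s i = 1) → (∃ i, s i ≠ 0) →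
      ∃ π : (Fin m → ℝ) → ℝ, Differentiable ℝ π ∧
        ∀ i, (s i = 1 → ∀ p ∈ C, 0 < fderiv ℝ (π ∘ f) p (Pi.single i 1)) ∧
             (s i = -1 → ∀ p ∈ C, fderiv ℝ (π ∘ f) p (Pi.single i 1) < 0)) :
    Set.InjOn f C := by
  intro x hx y hy hfxy
  by_contra hne
  obtain ⟨v, hv_def⟩ : ∃ v, v = y - x := ⟨_, rfl⟩
  have hv : v ≠ 0 := hv_def ▸ sub_ne_zero.2 (Ne.symm hne)
  set s : Fin n → ℤ := fun i => SignType.sign (v i)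
  have hs_sign (i : Fin n) : s i = -1 ∨ s i = 0 ∨ s i = 1 := by
    simp only [s]
    cases SignType.sign (v i) <;> simp
  have hs_ne : ∃ i, s i ≠ 0 := by
    obtain ⟨i, hi⟩ : ∃ i, v i ≠ 0 := Function.ne_iff.1 hv
    exact ⟨i, by rcases hi.lt_or_gt with hr | hr <;> simp [s, sign_neg, sign_pos, hr]⟩
  obtain ⟨π, hπ, hπs⟩ := h s hs_sign hs_ne
  have hlt : (π ∘ f) x < (π ∘ f) y := by
    refine hC.lt_of_fderiv_apply_sub_pos (fun p _ => (hπ.comp hf) p) hx hy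
      fun p hp => hv_def ▸ ?_
    refine (fderiv ℝ (π ∘ f) p : (Fin n → ℝ) →ₗ[ℝ] ℝ).apply_pos_of_mul_apply_single_pos hv
      fun i hi => ?_
    rcases hi.lt_or_gt with hneg | hpos
    · exact mul_pos_of_neg_of_neg hneg ((hπs i).2 (by simp [s, sign_neg hneg]) p hp)
    · exact mul_pos hpos ((hπs i).1 (by simp [s, sign_pos hpos]) p hp)
  exact hlt.ne (by simp [hfxy])
end

section
/- Let ZS_n denote the set of nonzero tuples in {-1,0,1}^n whose first nonzero entry is 1. Say t ∈ {-1,0,1}^n eliminates s ∈ ZS_n if (i) there exists i with t_i ≠ 0 and s_i ≠ 0, and (ii) there exists k ∈ {+1,-1} such that t_i = k·s_i for all i with both s_i ≠ 0 and t_i ≠ 0. Then for x ∈ ZS_n with exactly z zeros, the number of elements of ZS_n eliminated by x equals 3^z · (2^(n-z) - 1). -/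
/-- A vector with entries in {-1,0,1}. -/
def IsSignVec {n : ℕ} (s : Fin n → ℤ) : Prop :=
  ∀ i, s i = -1 ∨ s i = 0 ∨ s i = 1

/-- `ZS n`: nonzero sign vectors whose first nonzero entry is `1`. -/
def ZS (n : ℕ) : Set (Fin n → ℤ) :=
  {s | IsSignVec s ∧ ∃ i, s i = 1 ∧ ∀ j, j < i → s j = 0}

/-- `t` eliminates `s`: their supports intersect and on the common support
`t` agrees with `s` or with `-s`. -/
def Eliminates {n : ℕ} (t s : Fin n → ℤ) : Prop :=
  (∃ i, t i ≠ 0 ∧ s i ≠ 0) ∧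
  (∃ k : ℤ, (k = 1 ∨ k = -1) ∧ ∀ i, s i ≠ 0 → t i ≠ 0 → t i = k * s i)

/-- the set of elements of `ZS n` eliminated by some element of `X`. -/
def ZE {n : ℕ} (X : Set (Fin n → ℤ)) : Set (Fin n → ℤ) :=
  {s ∈ ZS n | ∃ t ∈ X, Eliminates t s}

lemma neg_signVec {n : ℕ} {s : Fin n → ℤ} (h : IsSignVec s) : IsSignVec (-s) := by
  intro i; rcases h i with h | h | h <;> simp [h]

lemma mem_or_neg_mem {n : ℕ} {s : Fin n → ℤ} (hs : IsSignVec s) (h0 : ∃ i, s i ≠ 0) :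
    s ∈ ZS n ∨ (-s) ∈ ZS n := by
  classical
  obtain ⟨j, hj⟩ := h0
  have hne : (Finset.univ.filter (fun i => s i ≠ 0)).Nonempty := ⟨j, by simp [hj]⟩
  set i0 := Finset.min' _ hne with hi0
  have hmem : s i0 ≠ 0 := by
    have := Finset.min'_mem _ hne
    simpa using this
  have hmin : ∀ j', j' < i0 → s j' = 0 := by
    intro j' hj'
    by_contra h
    exact absurd (Finset.min'_le _ j' (by simp [h])) (not_le.mpr hj')
  rcases hs i0 with h | h | h
  · right
    exact ⟨neg_signVec hs, i0, by simp [h], fun j hj => by simp [hmin j hj]⟩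
  · exact absurd h hmem
  · left
    exact ⟨hs, i0, h, hmin⟩

lemma not_both_mem {n : ℕ} {s : Fin n → ℤ} (h1 : s ∈ ZS n) (h2 : (-s) ∈ ZS n) : False := by
  obtain ⟨_, i, hi, hlt⟩ := h1
  obtain ⟨_, i', hi', hlt'⟩ := h2
  simp only [Pi.neg_apply] at hi' hlt'
  rcases lt_trichotomy i i' with h | h | h
  · have := hlt' i h; omega
  · subst h; omega
  · have := hlt i' h; omega

lemma elim_neg {n : ℕ} {x s : Fin n → ℤ} (h : Eliminates x s) : Eliminates x (-s) := by
  obtain ⟨⟨i, hxi, hsi⟩, k, hk, hagree⟩ := h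
  refine ⟨⟨i, hxi, by simpa using hsi⟩, -k, by omega, ?_⟩
  intro i hsi' hxi'
  have h := hagree i (by simpa using hsi') hxi'
  rw [Pi.neg_apply, h]; ring

lemma memF_forward {n : ℕ} {x s : Fin n → ℤ} (hxs : IsSignVec x) {k : ℤ} (hk : k = 1 ∨ k = -1)
    (h1 : ∀ i, s i ∈ (if x i = 0 then ({-1, 0, 1} : Finset ℤ) else ({0, k * x i} : Finset ℤ)))
    (h2 : ¬ ∀ i, s i ∈ (if x i = 0 then ({-1, 0, 1} : Finset ℤ) else ({0} : Finset ℤ))) :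
    IsSignVec s ∧ Eliminates x s := by
  have hsign : IsSignVec s := by
    intro i
    have hi := h1 i
    split_ifs at hi with hxi
    · simpa using hi
    · simp only [Finset.mem_insert, Finset.mem_singleton] at hi
      rcases hi with hi | hi
      · simp [hi]
      · rcases hk with rfl | rfl <;> rcases hxs i with hx1 | hx1 | hx1 <;>
          rw [hx1] at hi <;> omega
  refine ⟨hsign, ?_, k, hk, ?_⟩
  · push_neg at h2
    obtain ⟨i, hi⟩ := h2
    by_cases hxi : x i = 0
    · rw [if_pos hxi] at hi
      have := h1 i
      rw [if_pos hxi] at this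
      exact absurd this hi
    · rw [if_neg hxi] at hi
      simp only [Finset.mem_singleton] at hi
      exact ⟨i, hxi, hi⟩
  · intro i hsi hxi
    have hi := h1 i
    rw [if_neg hxi] at hi
    simp only [Finset.mem_insert, Finset.mem_singleton] at hi
    rcases hi with hi | hi
    · exact absurd hi hsi
    · rcases hk with rfl | rfl <;> rcases hxs i with hx1 | hx1 | hx1 <;>
        rw [hx1] at hi ⊢ <;> omega

theorem stmt2 {n : ℕ} (x : Fin n → ℤ) (hx : x ∈ ZS n)
    (z : ℕ) (hz : z = (Finset.univ.filter (fun i => x i = 0)).card) :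
    (ZE {x}).ncard = 3 ^ z * (2 ^ (n - z) - 1) := by
  classical
  obtain ⟨hxs, i0, hxi0, -⟩ := hx
  set F : ℤ → Finset (Fin n → ℤ) := fun k =>
    Fintype.piFinset (fun i => if x i = 0 then ({-1, 0, 1} : Finset ℤ)
      else ({0, k * x i} : Finset ℤ)) with hF
  set F0 : Finset (Fin n → ℤ) :=
    Fintype.piFinset (fun i => if x i = 0 then ({-1, 0, 1} : Finset ℤ)
      else ({0} : Finset ℤ)) with hF0
  have hzn : z + (Finset.univ.filter (fun i => ¬ x i = 0)).card = n := by
    rw [hz, Finset.card_filter_add_card_filter_not]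
    simp
  have card3 : ({-1, 0, 1} : Finset ℤ).card = 3 := by decide
  have cardFk : ∀ k : ℤ, k = 1 ∨ k = -1 → (F k).card = 3 ^ z * 2 ^ (n - z) := by
    intro k hk
    rw [hF]
    rw [Fintype.card_piFinset]
    have hc : ∀ i, (if x i = 0 then ({-1, 0, 1} : Finset ℤ)
        else ({0, k * x i} : Finset ℤ)).card = if x i = 0 then 3 else 2 := by
      intro i
      split_ifs with h
      · exact card3
      · rw [Finset.card_insert_of_notMem, Finset.card_singleton]
        simp only [Finset.mem_singleton]
        intro h0
        have hk0 : k ≠ 0 := by omega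
        exact (mul_ne_zero hk0 h) h0.symm
    have hm : (Finset.univ.filter (fun i => ¬ x i = 0)).card = n - z := by omega
    rw [Finset.prod_congr rfl (fun i _ => hc i), Finset.prod_ite, Finset.prod_const,
      Finset.prod_const, ← hz, hm]
  have cardF0 : F0.card = 3 ^ z := by
    rw [hF0, Fintype.card_piFinset]
    have hc : ∀ i, (if x i = 0 then ({-1, 0, 1} : Finset ℤ)
        else ({0} : Finset ℤ)).card = if x i = 0 then 3 else 1 := by
      intro i
      split_ifs with h
      · exact card3
      · exact Finset.card_singleton _
    rw [Finset.prod_congr rfl (fun i _ => hc i), Finset.prod_ite, Finset.prod_const,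
      Finset.prod_const, ← hz, one_pow, mul_one]
  have hsub : ∀ k : ℤ, F0 ⊆ F k := by
    intro k s hs
    rw [hF0, Fintype.mem_piFinset] at hs
    rw [hF, Fintype.mem_piFinset]
    intro i
    have h := hs i
    split_ifs at h ⊢ with hxi
    · exact h
    · simp only [Finset.mem_singleton] at h
      simp [h]
  set SF := (F 1 \ F0) ∪ (F (-1) \ F0) with hSF
  have hmemSF : ∀ s, s ∈ SF ↔ IsSignVec s ∧ Eliminates x s := by
    intro s
    rw [hSF]
    simp only [Finset.mem_union, Finset.mem_sdiff]
    constructor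
    · rintro (⟨h1, h2⟩ | ⟨h1, h2⟩)
      · simp only [hF, Fintype.mem_piFinset] at h1
        simp only [hF0, Fintype.mem_piFinset] at h2
        exact memF_forward hxs (Or.inl rfl) h1 h2
      · simp only [hF, Fintype.mem_piFinset] at h1
        simp only [hF0, Fintype.mem_piFinset] at h2
        exact memF_forward hxs (Or.inr rfl) h1 h2
    · rintro ⟨hsign, ⟨i1, hxi1, hsi1⟩, k, hk, hagree⟩
      have hmemFk : s ∈ F k := by
        rw [hF, Fintype.mem_piFinset]
        intro i
        split_ifs with hxi
        · rcases hsign i with h | h | h <;> simp [h]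
        · by_cases hsi : s i = 0
          · simp [hsi]
          · have h := hagree i hsi hxi
            have : s i = k * x i := by
              rcases hk with rfl | rfl <;> omega
            simp [this]
      have hnotF0 : s ∉ F0 := by
        rw [hF0, Fintype.mem_piFinset]
        push_neg
        refine ⟨i1, ?_⟩
        rw [if_neg hxi1]
        simpa using hsi1
      rcases hk with rfl | rfl
      · exact Or.inl ⟨hmemFk, hnotF0⟩
      · exact Or.inr ⟨hmemFk, hnotF0⟩
  have hZEmem : ∀ s, s ∈ ZE {x} ↔ s ∈ ZS n ∧ Eliminates x s := by
    intro s
    simp [ZE]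
  have hset : (↑SF : Set (Fin n → ℤ)) = ZE {x} ∪ (fun s : Fin n → ℤ => -s) '' ZE {x} := by
    ext s
    simp only [Finset.mem_coe, Set.mem_union, Set.mem_image]
    constructor
    · intro hs
      obtain ⟨hsign, helim⟩ := (hmemSF s).mp hs
      have hnz : ∃ i, s i ≠ 0 := by
        obtain ⟨⟨i, _, hsi⟩, _⟩ := helim
        exact ⟨i, hsi⟩
      rcases mem_or_neg_mem hsign hnz with h | h
      · exact Or.inl ((hZEmem s).mpr ⟨h, helim⟩)
      · refine Or.inr ⟨-s, (hZEmem (-s)).mpr ⟨h, elim_neg helim⟩, by simp⟩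
    · rintro (hs | ⟨u, hu, rfl⟩)
      · obtain ⟨hzs, helim⟩ := (hZEmem s).mp hs
        exact (hmemSF s).mpr ⟨hzs.1, helim⟩
      · obtain ⟨hzs, helim⟩ := (hZEmem u).mp hu
        exact (hmemSF _).mpr ⟨neg_signVec hzs.1, elim_neg helim⟩
  have hdisj : Disjoint (ZE {x}) ((fun s : Fin n → ℤ => -s) '' ZE {x}) := by
    rw [Set.disjoint_left]
    rintro s hs ⟨u, hu, rfl⟩
    have h1 : u ∈ ZS n := ((hZEmem u).mp hu).1
    have h2 : (-u) ∈ ZS n := ((hZEmem (-u)).mp hs).1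
    exact not_both_mem h1 h2
  have hfin : (ZE {x}).Finite := by
    apply Set.Finite.subset SF.finite_toSet
    rw [hset]
    exact Set.subset_union_left
  have hcount : SF.card = (ZE {x}).ncard + (ZE {x}).ncard := by
    rw [← Set.ncard_coe_finset, hset,
      Set.ncard_union_eq hdisj hfin (hfin.image _),
      Set.ncard_image_of_injective _ neg_injective]
  have hdisjF : Disjoint (F 1 \ F0) (F (-1) \ F0) := by
    rw [Finset.disjoint_left]
    intro s h1 h2
    rw [Finset.mem_sdiff] at h1 h2
    apply h1.2
    rw [hF0, Fintype.mem_piFinset]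
    intro i
    have a := (Fintype.mem_piFinset.mp h1.1) i
    have b := (Fintype.mem_piFinset.mp h2.1) i
    split_ifs with h
    · rw [if_pos h] at a; exact a
    · rw [if_neg h] at a b
      simp only [Finset.mem_insert, Finset.mem_singleton] at a b ⊢
      rcases hxs i with h1' | h1' | h1' <;> simp only [h1'] at a b <;> omega
  have hcard : SF.card = 2 * (3 ^ z * (2 ^ (n - z) - 1)) := by
    rw [hSF, Finset.card_union_of_disjoint hdisjF, Finset.card_sdiff_of_subset (hsub 1),
      Finset.card_sdiff_of_subset (hsub (-1)), cardFk 1 (Or.inl rfl), cardFk (-1) (Or.inr rfl), cardF0]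
    have h1 : 1 ≤ 2 ^ (n - z) := Nat.one_le_two_pow
    obtain ⟨c, hc⟩ : ∃ c, 2 ^ (n - z) = c + 1 := ⟨2 ^ (n - z) - 1, by omega⟩
    rw [hc]
    simp only [Nat.add_sub_cancel]
    have h2 : 3 ^ z * (c + 1) = 3 ^ z * c + 3 ^ z := by ring
    omega
  omega
end

section
/- Let v ∈ ℝ^n with sign vector s = (sgn(v_1),...,sgn(v_n)), and let x ∈ ZS_n. If s or -s is an element of ZS_n eliminated by x, then the dot product v · x is nonzero. -/
theorem stmt3 {n : ℕ} (v : Fin n → ℝ)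
    (s : Fin n → ℤ)
    (hs : s = fun i => if 0 < v i then 1 else if v i < 0 then -1 else 0)
    (x : Fin n → ℤ) (hx : x ∈ ZS n)
    (h : s ∈ ZE {x} ∨ -s ∈ ZE {x}) :
    (∑ i, v i * (x i : ℝ)) ≠ 0 := by
  have hs0 : ∀ i, s i = 0 → v i = 0 := by
    intro i hi; rw [hs] at hi; simp only at hi
    split_ifs at hi <;> first | omega | linarith
  have hs1 : ∀ i, s i = 1 → 0 < v i := by
    intro i hi; rw [hs] at hi; simp only at hi
    split_ifs at hi <;> first | omega | linarith | assumption
  have hsm1 : ∀ i, s i = -1 → v i < 0 := by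
    intro i hi; rw [hs] at hi; simp only at hi
    split_ifs at hi <;> first | omega | linarith | assumption
  have hsv : ∀ i, s i = -1 ∨ s i = 0 ∨ s i = 1 := by
    intro i; rw [hs]; simp only; split_ifs <;> omega
  obtain ⟨k, hk, hagree, i0, hxi0, hsi0⟩ :
      ∃ k : ℤ, (k = 1 ∨ k = -1) ∧ (∀ i, s i ≠ 0 → x i ≠ 0 → x i = k * s i) ∧
        ∃ i, x i ≠ 0 ∧ s i ≠ 0 := by
    rcases h with ⟨-, t, ht, ⟨⟨i, hti, hsi⟩, k, hk, hag⟩⟩ |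
      ⟨-, t, ht, ⟨⟨i, hti, hsi⟩, k, hk, hag⟩⟩ <;>
      rw [Set.mem_singleton_iff] at ht <;> subst ht
    · exact ⟨k, hk, hag, i, hti, hsi⟩
    · refine ⟨-k, by omega, fun j hj hxj => ?_, i, hti, by simpa using hsi⟩
      have := hag j (by simpa using hj) hxj
      simp only [Pi.neg_apply] at this
      linarith
  have keypos : ∀ i, x i ≠ 0 → s i ≠ 0 → 0 < (k : ℝ) * (v i * (x i : ℝ)) := by
    intro i hxz hsz
    have hxe : ((x i : ℤ) : ℝ) = (k : ℝ) * (s i : ℝ) := by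
      exact_mod_cast congrArg (Int.cast : ℤ → ℝ) (hagree i hsz hxz)
    rcases hsv i with h' | h' | h'
    · have hv := hsm1 i h'
      rcases hk with rfl | rfl <;> rw [hxe, h'] <;> push_cast <;> nlinarith
    · exact absurd h' hsz
    · have hv := hs1 i h'
      rcases hk with rfl | rfl <;> rw [hxe, h'] <;> push_cast <;> nlinarith
  have key : ∀ i ∈ Finset.univ, 0 ≤ (k : ℝ) * (v i * (x i : ℝ)) := by
    intro i _
    by_cases hxz : x i = 0
    · simp [hxz]
    by_cases hsz : s i = 0
    · simp [hs0 i hsz]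
    · exact (keypos i hxz hsz).le
  have hsum : 0 < ∑ i, (k : ℝ) * (v i * (x i : ℝ)) :=
    Finset.sum_pos' key ⟨i0, Finset.mem_univ _, keypos i0 hxi0 hsi0⟩
  rw [← Finset.mul_sum] at hsum
  intro h0
  rw [h0, mul_zero] at hsum
  exact lt_irrefl 0 hsum
end

section
/- Let X = {X^1,...,X^m} ⊆ ZS_n and let M_X be the m×n matrix whose rows are the X^i. If the columns of M_X are linearly dependent over ℝ, then X does not eliminate all of ZS_n; that is, there exists s ∈ ZS_n which is not eliminated by any element of X. In particular, if every element of ZS_n is eliminated by some element of X and |X| = n, then the X^i are linearly independent. -/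
open Matrix


lemma key_lemma {n : ℕ} (X : Finset (Fin n → ℤ)) (a : Fin n → ℝ) (j : Fin n)
    (hj : 0 < a j) (hmin : ∀ i, i < j → a i = 0)
    (h0 : ∀ t ∈ X, (∑ i, a i * (t i : ℝ)) = 0) :
    ∃ s ∈ ZS n, ∀ t ∈ X, ¬ Eliminates t s := by
  set s : Fin n → ℤ := fun i => if 0 < a i then 1 else if a i < 0 then -1 else 0 with hs
  have hsz : ∀ i, s i = 0 ↔ a i = 0 := by
    intro i; simp only [hs]
    rcases lt_trichotomy (a i) 0 with h | h | h
    · simp [h, not_lt.mpr h.le, h.ne]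
    · simp [h]
    · simp [h, h.ne']
  refine ⟨s, ⟨?_, j, ?_, ?_⟩, ?_⟩
  · intro i; simp only [hs]; split_ifs <;> simp
  · simp [hs, hj]
  · intro i hi; rw [hsz]; exact hmin i hi
  · rintro t ht ⟨⟨i0, ht0, hs0⟩, k, hk, hE⟩
    have ha0 : a i0 ≠ 0 := fun h => hs0 ((hsz i0).mpr h)
    have hterm : ∀ i, a i * (t i : ℝ) = (k : ℝ) * (if t i = 0 then 0 else |a i|) := by
      intro i
      by_cases h1 : t i = 0
      · simp [h1]
      · simp only [h1, if_neg, ite_false]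
        by_cases h2 : a i = 0
        · simp [h2]
        · have hsi : s i ≠ 0 := fun h => h2 ((hsz i).mp h)
          have hti := hE i hsi h1
          rw [hti]
          rcases lt_or_gt_of_ne h2 with h | h
          · have hsi' : s i = -1 := by simp [hs, h, not_lt.mpr h.le]
            rw [hsi', abs_of_neg h]; push_cast; ring
          · have hsi' : s i = 1 := by simp [hs, h]
            rw [hsi', abs_of_pos h]; push_cast; ring
    have hsum := h0 t ht
    rw [Finset.sum_congr rfl (fun i _ => hterm i), ← Finset.mul_sum] at hsum
    have hkne : (k : ℝ) ≠ 0 := by rcases hk with h | h <;> simp [h]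
    have hsum0 : (∑ i, (if t i = 0 then (0:ℝ) else |a i|)) = 0 :=
      (mul_eq_zero.mp hsum).resolve_left hkne
    have hle : (if t i0 = 0 then (0:ℝ) else |a i0|) = 0 :=
      (Finset.sum_eq_zero_iff_of_nonneg
        (fun i _ => by split_ifs <;> positivity)).mp hsum0 i0 (Finset.mem_univ _)
    rw [if_neg ht0] at hle
    exact ha0 (abs_eq_zero.mp hle)

lemma part1 {n : ℕ} (X : Finset (Fin n → ℤ)) (a : Fin n → ℝ) (ha : a ≠ 0)
    (h0 : ∀ t ∈ X, (∑ i, a i * (t i : ℝ)) = 0) :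
    ∃ s ∈ ZS n, ∀ t ∈ X, ¬ Eliminates t s := by
  set S := Finset.univ.filter (fun i => a i ≠ 0) with hS
  have hne : S.Nonempty := by
    rcases Function.ne_iff.mp ha with ⟨j, hj⟩
    have : a j ≠ 0 := by simpa using hj
    exact ⟨j, by simp [hS, this]⟩
  set j := S.min' hne with hjdef
  have haj : a j ≠ 0 := by
    have := S.min'_mem hne
    simp only [hS, Finset.mem_filter] at this
    exact this.2
  have hmin : ∀ i, i < j → a i = 0 := by
    intro i hi
    by_contra h
    exact absurd (S.min'_le i (by simp [hS, h])) (not_le.mpr hi)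
  rcases lt_or_gt_of_ne haj with h | h
  · refine key_lemma X (-a) j (by simpa using h) (fun i hi => by simp [hmin i hi]) ?_
    intro t ht
    simp only [Pi.neg_apply, neg_mul, Finset.sum_neg_distrib, h0 t ht, neg_zero]
  · exact key_lemma X a j h hmin h0

theorem stmt4 {n : ℕ} :
    (∀ X : Finset (Fin n → ℤ), ↑X ⊆ ZS n →
      (∃ a : Fin n → ℝ, a ≠ 0 ∧ ∀ t ∈ X, (∑ i, a i * (t i : ℝ)) = 0) →
      ∃ s ∈ ZS n, ∀ t ∈ X, ¬ Eliminates t s) ∧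
    (∀ X : Finset (Fin n → ℤ), ↑X ⊆ ZS n → X.card = n →
      ZE ↑X = ZS n →
      ¬ ∃ c : (Fin n → ℤ) → ℝ, (∃ t ∈ X, c t ≠ 0) ∧
        ∀ i, (∑ t ∈ X, c t * (t i : ℝ)) = 0) := by
  constructor
  · rintro X _ ⟨a, ha, h0⟩
    exact part1 X a ha h0
  · rintro X hX hcard hZE ⟨c, ⟨t0, ht0, hc0⟩, hc⟩
    have hcardX : Fintype.card X = n := by rw [Fintype.card_coe]; exact hcard
    let e : Fin n ≃ X := (Fintype.equivFinOfCardEq hcardX).symm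
    set M : Matrix (Fin n) (Fin n) ℝ := fun p i => ((e p : Fin n → ℤ) i : ℝ) with hM
    have hvm : ∃ v, v ≠ 0 ∧ v ᵥ* M = 0 := by
      refine ⟨fun p => c (e p), ?_, ?_⟩
      · intro h
        apply hc0
        have := congrFun h (e.symm ⟨t0, ht0⟩)
        simpa using this
      · funext i
        have hci := hc i
        have hsum : (∑ t ∈ X, c t * (t i : ℝ)) = ∑ p, c (e p) * ((e p : Fin n → ℤ) i : ℝ) := by
          rw [← Finset.sum_attach X (fun t => c t * (t i : ℝ))]
          exact (Equiv.sum_comp e (fun t : X => c t * ((t : Fin n → ℤ) i : ℝ))).symm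
        rw [hsum] at hci
        simpa [Matrix.vecMul, dotProduct, hM] using hci
    have hdet : M.det = 0 := Matrix.exists_vecMul_eq_zero_iff.mp
      ⟨hvm.choose, hvm.choose_spec.1, hvm.choose_spec.2⟩
    obtain ⟨a, ha, hMa⟩ := Matrix.exists_mulVec_eq_zero_iff.mpr hdet
    have h0 : ∀ t ∈ X, (∑ i, a i * (t i : ℝ)) = 0 := by
      intro t ht
      have := congrFun hMa (e.symm ⟨t, ht⟩)
      simp only [Matrix.mulVec, dotProduct, hM, Equiv.apply_symm_apply,
        Pi.zero_apply] at this
      rw [← this]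
      exact Finset.sum_congr rfl (fun i _ => mul_comm _ _)
    obtain ⟨s, hsZS, hsnot⟩ := part1 X a ha h0
    have : s ∈ ZE (↑X : Set (Fin n → ℤ)) := hZE ▸ hsZS
    obtain ⟨-, t, htX, hel⟩ := this
    exact hsnot t htX hel
end

section
/- If X ⊆ ZS_n satisfies that every element of ZS_n is eliminated by some element of X, then |X| ≥ n. -/
theorem stmt5 {n : ℕ} (X : Finset (Fin n → ℤ)) (hX : ↑X ⊆ ZS n)
    (h : ∀ s ∈ ZS n, ∃ t ∈ X, Eliminates t s) :
    n ≤ X.card := by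
  by_contra hlt
  push_neg at hlt
  -- the linear map sending `w` to its dot products with elements of `X`
  let f : (Fin n → ℚ) →ₗ[ℚ] (X → ℚ) :=
    { toFun := fun w t => ∑ i, w i * ((t : Fin n → ℤ) i : ℚ)
      map_add' := by
        intro x y; funext t; simp [add_mul, Finset.sum_add_distrib]
      map_smul' := by
        intro c x; funext t; simp [Finset.mul_sum, mul_assoc] }
  have hninj : LinearMap.ker f ≠ ⊥ := by
    intro hker
    have hinj : Function.Injective f := LinearMap.ker_eq_bot.mp hker
    have := LinearMap.finrank_le_finrank_of_injective hinj
    simp [Module.finrank_fintype_fun_eq_card, Fintype.card_coe] at this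
    omega
  obtain ⟨v, hvker, hv0⟩ := Submodule.exists_mem_ne_zero_of_ne_bot hninj
  have hvsum : ∀ t ∈ X, ∑ i, v i * ((t i : ℤ) : ℚ) = 0 := by
    intro t ht
    have hfv : f v = 0 := hvker
    have := congrFun hfv ⟨t, ht⟩
    simpa [f] using this
  -- find the first nonzero coordinate of `v`
  obtain ⟨i0, hi0⟩ := Function.ne_iff.mp hv0
  have hi0' : v i0 ≠ 0 := by simpa using hi0
  let F := Finset.univ.filter fun i => v i ≠ 0
  have hFne : F.Nonempty := ⟨i0, by simp [F, hi0']⟩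
  let m := F.min' hFne
  have hm : v m ≠ 0 := by have := F.min'_mem hFne; simpa [F] using this
  have hmlt : ∀ j, j < m → v j = 0 := by
    intro j hj
    by_contra hvj
    have : m ≤ j := F.min'_le j (by simp [F, hvj])
    exact absurd this (not_le.mpr hj)
  -- normalize so the first nonzero coordinate is positive
  let c : ℚ := if 0 < v m then 1 else -1
  let w : Fin n → ℚ := fun i => c * v i
  have hwm : 0 < w m := by
    by_cases h1 : 0 < v m
    · simpa [w, c, h1] using h1
    · have h2 : v m < 0 := lt_of_le_of_ne (not_lt.mp h1) hm
      simp only [w, c, if_neg h1]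
      nlinarith
  have hwzero : ∀ i, v i = 0 → w i = 0 := by
    intro i hi; simp [w, hi]
  have hwne : ∀ i, w i ≠ 0 → v i ≠ 0 := by
    intro i hwi hvi; exact hwi (hwzero i hvi)
  -- the sign vector of `w`
  let s : Fin n → ℤ := fun i => if 0 < w i then 1 else if w i = 0 then 0 else -1
  have hsZS : s ∈ ZS n := by
    refine ⟨fun i => ?_, m, ?_, ?_⟩
    · simp only [s]; split_ifs <;> tauto
    · simp [s, hwm]
    · intro j hj
      have : w j = 0 := hwzero j (hmlt j hj)
      simp [s, this]
  have hs0 : ∀ i, s i ≠ 0 → w i ≠ 0 := by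
    intro i hsi hwi
    apply hsi
    simp [s, hwi]
  have hws : ∀ i, w i * (s i : ℚ) = |w i| := by
    intro i
    simp only [s]
    rcases lt_trichotomy (w i) 0 with h1 | h1 | h1
    · rw [if_neg (by linarith), if_neg (by linarith), abs_of_neg h1]
      push_cast; ring
    · simp [h1]
    · rw [if_pos h1, abs_of_pos h1]; simp
  obtain ⟨t, htX, ⟨⟨i1, ht1, hs1⟩, k, hk, htk⟩⟩ := h s hsZS
  have hk2 : (k : ℚ) * (k : ℚ) = 1 := by rcases hk with hk | hk <;> simp [hk]
  have hsumw : ∑ i, w i * ((t i : ℤ) : ℚ) = 0 := by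
    have : ∑ i, w i * ((t i : ℤ) : ℚ) = c * ∑ i, v i * ((t i : ℤ) : ℚ) := by
      rw [Finset.mul_sum]
      exact Finset.sum_congr rfl (fun i _ => by simp [w, mul_assoc])
    rw [this, hvsum t htX, mul_zero]
  -- each term of `k • (w ⬝ t)` is nonnegative
  have hterm : ∀ i, 0 ≤ (k : ℚ) * (w i * ((t i : ℤ) : ℚ)) := by
    intro i
    by_cases hti : t i = 0
    · simp [hti]
    by_cases hwi : w i = 0
    · simp [hwi]
    have hsi : s i ≠ 0 := by
      simp only [s]
      rcases lt_trichotomy (w i) 0 with h1 | h1 | h1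
      · rw [if_neg (by linarith), if_neg (by linarith)]; norm_num
      · exact absurd h1 hwi
      · rw [if_pos h1]; norm_num
    have := htk i hsi hti
    have hcast : ((t i : ℤ) : ℚ) = (k : ℚ) * ((s i : ℤ) : ℚ) := by
      rw [this]; push_cast; ring
    rw [hcast]
    have : (k : ℚ) * (w i * ((k : ℚ) * (s i : ℚ))) = ((k : ℚ) * (k : ℚ)) * (w i * (s i : ℚ)) := by ring
    rw [this, hk2, one_mul, hws i]
    exact abs_nonneg _
  -- and the term at `i1` is positive
  have hpos : 0 < (k : ℚ) * (w i1 * ((t i1 : ℤ) : ℚ)) := by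
    have hwi1 : w i1 ≠ 0 := hs0 i1 hs1
    have := htk i1 hs1 ht1
    have hcast : ((t i1 : ℤ) : ℚ) = (k : ℚ) * ((s i1 : ℤ) : ℚ) := by
      rw [this]; push_cast; ring
    rw [hcast]
    have heq : (k : ℚ) * (w i1 * ((k : ℚ) * (s i1 : ℚ))) = ((k : ℚ) * (k : ℚ)) * (w i1 * (s i1 : ℚ)) := by
      ring
    rw [heq, hk2, one_mul, hws i1]
    exact abs_pos.mpr hwi1
  have hsumpos : 0 < ∑ i, (k : ℚ) * (w i * ((t i : ℤ) : ℚ)) :=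
    Finset.sum_pos' (fun i _ => hterm i) ⟨i1, Finset.mem_univ i1, hpos⟩
  rw [← Finset.mul_sum, hsumw, mul_zero] at hsumpos
  exact lt_irrefl 0 hsumpos
end

section
/- Let ZS_n^0 be the set of elements of ZS_n all of whose coordinates are nonzero (so ZS_n^0 consists of the 2^(n-1) vectors in {-1,1}^n with first coordinate 1). Then ZS_n^0 is a minimal element of the poset E(ZS_n): every element of ZS_n is eliminated by some element of ZS_n^0, and no proper subset of ZS_n^0 eliminates all of ZS_n. -/
/-- `ZS0 n`: elements of `ZS n` with all coordinates nonzero. -/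
def ZS0 (n : ℕ) : Set (Fin n → ℤ) := {s ∈ ZS n | ∀ i, s i ≠ 0}

/-- For an element of `ZS0 n`, the witness index is ≤ every index. -/
lemma zs0_first {n : ℕ} {s : Fin n → ℤ} (hs : s ∈ ZS0 n) :
    ∃ i, s i = 1 ∧ ∀ j, i ≤ j := by
  obtain ⟨⟨_, i, hi1, hi0⟩, hnz⟩ := hs
  exact ⟨i, hi1, fun j => le_of_not_gt fun hj => hnz j (hi0 j hj)⟩

theorem stmt7 {n : ℕ} :
    ZE (ZS0 n) = ZS n ∧ ∀ Y ⊆ ZS0 n, ZE Y = ZS n → Y = ZS0 n := by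
  constructor
  · apply Set.Subset.antisymm (fun s hs => hs.1)
    intro s hs
    obtain ⟨hsv, i0, hi1, hi0⟩ := hs
    set t : Fin n → ℤ := fun j => if s j = 0 then 1 else s j with ht
    have htnz : ∀ j, t j ≠ 0 := by
      intro j
      simp only [ht]
      split
      · exact one_ne_zero
      · assumption
    have ht0 : t ∈ ZS0 n := by
      refine ⟨⟨fun j => ?_, ⟨0, Nat.lt_of_le_of_lt (Nat.zero_le _) i0.isLt⟩, ?_, ?_⟩, htnz⟩
      · simp only [ht]
        split
        · exact Or.inr (Or.inr rfl)
        · exact hsv j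
      · simp only [ht]
        split
        · rfl
        · -- s at index 0 is nonzero, so it must be 1 (i0 = 0)
          rename_i hne
          rcases lt_or_ge (⟨0, Nat.lt_of_le_of_lt (Nat.zero_le _) i0.isLt⟩ : Fin n) i0 with h | h
          · exact absurd (hi0 _ h) hne
          · have : i0 = ⟨0, Nat.lt_of_le_of_lt (Nat.zero_le _) i0.isLt⟩ :=
              le_antisymm h (by exact Fin.mk_le_of_le_val (Nat.zero_le _))
            rw [← this]; exact hi1
      · intro j hj
        exact absurd hj (by simp [Fin.lt_def])
    refine ⟨⟨hsv, i0, hi1, hi0⟩, t, ht0, ⟨i0, htnz i0, by rw [hi1]; exact one_ne_zero⟩,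
      1, Or.inl rfl, fun i hsi _ => ?_⟩
    simp only [ht, if_neg hsi, one_mul]
  · intro Y hY hZE
    refine Set.Subset.antisymm hY fun t ht => ?_
    have : t ∈ ZE Y := by rw [hZE]; exact ht.1
    obtain ⟨-, t', ht'Y, ⟨-, k, hk, hcoord⟩⟩ := this
    have ht' : t' ∈ ZS0 n := hY ht'Y
    obtain ⟨i, hti, hmin⟩ := zs0_first ht
    obtain ⟨i', ht'i, hmin'⟩ := zs0_first ht'
    have hii : i = i' := le_antisymm (hmin i') (hmin' i)
    have hk1 : k = 1 := by
      have h := hcoord i (ht.2 i) (ht'.2 i)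
      rw [hii, ht'i] at h
      rw [hii] at hti
      rw [hti, mul_one] at h
      omega
    have : t' = t := by
      funext j
      rw [hcoord j (ht.2 j) (ht'.2 j), hk1, one_mul]
    rwa [← this]
end

section
/- Let X = {x, y} ⊆ ZS_n, with the 2×n matrix of rows x,y having a_1 columns (1,1)ᵀ, a_2 columns (1,-1)ᵀ, b_1 columns (1,0)ᵀ, b_2 columns (0,1)ᵀ, and c columns (0,0)ᵀ. Then the number of elements of ZS_n eliminated by x or by y equals 3^c·(3^(b_1)·2^(a_1+a_2+b_2) + 3^(b_2)·2^(a_1+a_2+b_1) - 2^(b_1+b_2)(2^(a_1)+2^(a_2)) - 3^(b_1) - 3^(b_2) + 2^(b_1+1) + 2^(b_2+1) - 2). -/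
/-!
Negation is a fixed-point-free involution on the sign vectors eliminated by `x` or `y`, and
exactly one vector of each pair `s, -s` lies in `ZS n`; so `2 * |ZE {x, y}|` counts all
eliminated sign vectors. For `k = ±1` let `C k t` be the sign vectors that agree with `k • t` on
the common support, and `C 0 t` those whose support misses that of `t`. Since
`C 0 t = C 1 t ∩ C (-1) t`, the indicator of "`t` eliminates `s`" is
`[C 1 t] + [C (-1) t] - 2 [C 0 t]`. Expanding `[x or y eliminates s]` as `a + b - a b` in these
indicators leaves only sets cut out coordinatewise, whose sizes factor over the five column
types of `(x, y)`.
-/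

open Finset

variable {n : ℕ}

def signs : Finset ℤ := {-1, 0, 1}

lemma sum_signs {M : Type*} [AddCommMonoid M] (f : ℤ → M) :
    ∑ k ∈ signs, f k = f (-1) + f 0 + f 1 := by
  simp [signs, add_assoc]

def signVecs (n : ℕ) : Finset (Fin n → ℤ) := Fintype.piFinset fun _ => signs

lemma mem_signVecs {s : Fin n → ℤ} : s ∈ signVecs n ↔ IsSignVec s := by
  simp [signVecs, signs, IsSignVec]

lemma card_filter_signVecs_forall (q : Fin n → ℤ → Prop) [∀ i, DecidablePred (q i)] :
    #{s ∈ signVecs n | ∀ i, q i (s i)} = ∏ i, #{e ∈ signs | q i e} := by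
  rw [← Fintype.card_piFinset]
  congr 1
  ext s
  simp [signVecs, forall_and]

lemma exists_first_ne_zero {s : Fin n → ℤ} (h : s ≠ 0) :
    ∃ i, s i ≠ 0 ∧ ∀ j < i, s j = 0 := by
  obtain ⟨i, hi⟩ := Function.ne_iff.1 h
  have hne : ({j | s j ≠ 0} : Finset (Fin n)).Nonempty := ⟨i, by simpa using hi⟩
  refine ⟨Finset.min' _ hne, ?_, fun j hj => ?_⟩
  · simpa using Finset.min'_mem _ hne
  · by_contra hsj
    exact (Finset.min'_le {j | s j ≠ 0} j (by simpa using hsj)).not_gt hj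

lemma mem_ZS_iff_of_first {s : Fin n → ℤ} (hs : IsSignVec s) {i : Fin n}
    (hi : s i ≠ 0) (hfirst : ∀ j < i, s j = 0) : s ∈ ZS n ↔ s i = 1 := by
  refine ⟨fun ⟨_, j, hj, hbefore⟩ => ?_, fun h => ⟨hs, i, h, hfirst⟩⟩
  rcases lt_trichotomy i j with hij | rfl | hji
  · exact absurd (hbefore i hij) hi
  · exact hj
  · exact absurd (hfirst j hji) (by simp [hj])

lemma neg_mem_ZS_iff {s : Fin n → ℤ} (hs : IsSignVec s) (h0 : s ≠ 0) :
    -s ∈ ZS n ↔ s ∉ ZS n := by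
  obtain ⟨i, hi, hfirst⟩ := exists_first_ne_zero h0
  have hs' : IsSignVec (-s) := fun j => by rcases hs j with h | h | h <;> simp [h]
  rw [mem_ZS_iff_of_first hs hi hfirst,
    mem_ZS_iff_of_first hs' (by simpa using hi) (fun j hj => by simp [hfirst j hj])]
  rcases hs i with h | h | h <;> simp_all

open Classical in
lemma card_eq_two_mul_card_filter_mem_ZS {E : Finset (Fin n → ℤ)}
    (hE : ∀ s ∈ E, IsSignVec s ∧ s ≠ 0) (hneg : ∀ s ∈ E, -s ∈ E) :
    #E = 2 * #{s ∈ E | s ∈ ZS n} := by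
  have hswap : #{s ∈ E | s ∉ ZS n} = #{s ∈ E | s ∈ ZS n} := by
    refine card_nbij' (fun s => -s) (fun s => -s) ?_ ?_ (fun s _ => neg_neg s)
      (fun s _ => neg_neg s) <;>
    · intro s hs
      simp only [coe_filter, Set.mem_ofPred_eq] at hs ⊢
      obtain ⟨hsv, h0⟩ := hE s hs.1
      refine ⟨hneg s hs.1, ?_⟩
      simpa [neg_mem_ZS_iff hsv h0] using hs.2
  have := card_filter_add_card_filter_not (s := E) (· ∈ ZS n)
  omega

lemma Eliminates.neg {t s : Fin n → ℤ} (h : Eliminates t s) : Eliminates t (-s) := by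
  obtain ⟨⟨i, hti, hsi⟩, k, hk, hagree⟩ := h
  refine ⟨⟨i, hti, by simpa using hsi⟩, -k, by omega, fun j hsj htj => ?_⟩
  rw [hagree j (by simpa using hsj) htj]
  simp

lemma eliminates_neg_iff {t s : Fin n → ℤ} : Eliminates t (-s) ↔ Eliminates t s :=
  ⟨fun h => by simpa using h.neg, Eliminates.neg⟩

lemma Eliminates.ne_zero {t s : Fin n → ℤ} (h : Eliminates t s) : s ≠ 0 := by
  rintro rfl
  obtain ⟨⟨i, -, hi⟩, -⟩ := h
  exact hi rfl

open Classical in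
lemma two_mul_ncard_ZE (X : Set (Fin n → ℤ)) :
    2 * (ZE X).ncard = #{s ∈ signVecs n | ∃ t ∈ X, Eliminates t s} := by
  set E : Finset (Fin n → ℤ) := {s ∈ signVecs n | ∃ t ∈ X, Eliminates t s}
  have hZE : ZE X = ↑({s ∈ E | s ∈ ZS n}) := by
    ext s
    simp only [ZE, E, coe_filter, mem_filter, mem_signVecs, Set.mem_ofPred_eq]
    exact ⟨fun ⟨hs, ht⟩ => ⟨⟨hs.1, ht⟩, hs⟩, fun ⟨⟨_, ht⟩, hs⟩ => ⟨hs, ht⟩⟩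
  rw [hZE, Set.ncard_coe_finset, ← card_eq_two_mul_card_filter_mem_ZS]
  · intro s hs
    simp only [E, mem_filter, mem_signVecs] at hs
    obtain ⟨t, -, hts⟩ := hs.2
    exact ⟨hs.1, hts.ne_zero⟩
  · intro s hs
    simp only [E, mem_filter, mem_signVecs] at hs ⊢
    refine ⟨fun i => ?_, by simpa only [eliminates_neg_iff] using hs.2⟩
    rcases hs.1 i with h | h | h <;> simp [h]

-- `∀ i, SignAgree k (t i) (s i)` says `s ∈ C k t`; for `k = 0` the supports are disjoint.
def SignAgree (k a e : ℤ) : Prop := e = 0 ∨ a = 0 ∨ a = k * e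

instance (k a : ℤ) : DecidablePred (SignAgree k a) :=
  fun e => inferInstanceAs (Decidable (e = 0 ∨ a = 0 ∨ a = k * e))

def eliminationWeight (k : ℤ) : ℤ := if k = 0 then -2 else 1

lemma eliminates_iff {t s : Fin n → ℤ} :
    Eliminates t s ↔ ¬ (∀ i, SignAgree 0 (t i) (s i)) ∧
      ((∀ i, SignAgree 1 (t i) (s i)) ∨ ∀ i, SignAgree (-1) (t i) (s i)) := by
  unfold Eliminates SignAgree
  refine and_congr ?_ ?_
  · simp only [zero_mul, or_self, not_forall, not_or]
    exact exists_congr fun i => and_comm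
  · constructor
    · rintro ⟨k, rfl | rfl, h⟩
      · exact Or.inl fun i => by by_cases hs : s i = 0 <;> by_cases ht : t i = 0 <;> simp_all
      · exact Or.inr fun i => by by_cases hs : s i = 0 <;> by_cases ht : t i = 0 <;> simp_all
    · rintro (h | h)
      · exact ⟨1, by norm_num, fun i hs ht => by simpa [hs, ht] using h i⟩
      · exact ⟨-1, by norm_num, fun i hs ht => by simpa [hs, ht] using h i⟩

open Classical in
lemma ite_eliminates_eq_sum (t s : Fin n → ℤ) :
    (if Eliminates t s then 1 else 0 : ℤ) =
      ∑ k ∈ signs, eliminationWeight k * if ∀ i, SignAgree k (t i) (s i) then 1 else 0 := by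
  have hdisj : (∀ i, SignAgree 0 (t i) (s i)) →
      (∀ i, SignAgree 1 (t i) (s i)) ∧ ∀ i, SignAgree (-1) (t i) (s i) := by
    simp only [SignAgree, forall_and.symm]
    intro h i
    rcases h i with h | h | h <;> simp [h]
  have hboth : (∀ i, SignAgree 1 (t i) (s i)) → (∀ i, SignAgree (-1) (t i) (s i)) →
      ∀ i, SignAgree 0 (t i) (s i) := by
    simp only [SignAgree]
    intro h₁ h₂ i
    rcases h₁ i with h | h | h <;> rcases h₂ i with h' | h' | h' <;> omega
  simp only [sum_signs, eliminationWeight]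
  split_ifs <;> simp_all [eliminates_iff]

open Classical in
lemma ite_eliminates_or_eq_sum (x y s : Fin n → ℤ) :
    (if Eliminates x s ∨ Eliminates y s then 1 else 0 : ℤ) =
      ∑ k ∈ signs, eliminationWeight k * (if ∀ i, SignAgree k (x i) (s i) then 1 else 0)
      + ∑ k ∈ signs, eliminationWeight k * (if ∀ i, SignAgree k (y i) (s i) then 1 else 0)
      - ∑ k ∈ signs, ∑ l ∈ signs, eliminationWeight k * eliminationWeight l *
          if ∀ i, SignAgree k (x i) (s i) ∧ SignAgree l (y i) (s i) then 1 else 0 := by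
  have hor (P Q : Prop) [Decidable P] [Decidable Q] :
      (if P ∨ Q then 1 else 0 : ℤ) =
        (if P then 1 else 0) + (if Q then 1 else 0) - (if P then 1 else 0) * (if Q then 1 else 0) := by
    split_ifs <;> simp_all
  rw [hor, ite_eliminates_eq_sum, ite_eliminates_eq_sum, sum_mul_sum]
  congr 1
  refine sum_congr rfl fun k _ => sum_congr rfl fun l _ => ?_
  simp only [mul_mul_mul_comm, ite_zero_mul_ite_zero, forall_and, mul_one]

open Classical in
lemma card_filter_eliminates_or (x y : Fin n → ℤ) :
    (#{s ∈ signVecs n | Eliminates x s ∨ Eliminates y s} : ℤ) =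
      ∑ k ∈ signs, eliminationWeight k * #{s ∈ signVecs n | ∀ i, SignAgree k (x i) (s i)}
      + ∑ k ∈ signs, eliminationWeight k * #{s ∈ signVecs n | ∀ i, SignAgree k (y i) (s i)}
      - ∑ k ∈ signs, ∑ l ∈ signs, eliminationWeight k * eliminationWeight l *
          #{s ∈ signVecs n | ∀ i, SignAgree k (x i) (s i) ∧ SignAgree l (y i) (s i)} := by
  simp only [natCast_card_filter, ite_eliminates_or_eq_sum, sum_add_distrib, sum_sub_distrib,
    mul_sum]
  congr 1
  · congr 1 <;> exact sum_comm
  · rw [sum_comm]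
    exact sum_congr rfl fun k _ => sum_comm

lemma prod_eq_prod_pow_card_fiber {ι κ M : Type*} [Fintype ι] [DecidableEq κ] [CommMonoid M]
    {g : ι → κ} {T : Finset κ} (hT : ∑ p ∈ T, #{i | g i = p} = Fintype.card ι) (f : κ → M) :
    ∏ i, f (g i) = ∏ p ∈ T, f p ^ #{i | g i = p} := by
  have hmaps : ∀ i ∈ (univ : Finset ι), g i ∈ T := by
    rw [sum_card_fiberwise_eq_card_filter, ← card_univ] at hT
    exact card_filter_eq_iff.1 hT
  rw [← prod_fiberwise_of_maps_to' hmaps]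
  exact prod_congr rfl fun p _ => prod_const _

lemma card_filter_signVecs_of_columns {x y : Fin n → ℤ} {a₁ a₂ b₁ b₂ c : ℕ}
    (ha₁ : a₁ = #{i | x i = 1 ∧ y i = 1}) (ha₂ : a₂ = #{i | x i = 1 ∧ y i = -1})
    (hb₁ : b₁ = #{i | x i = 1 ∧ y i = 0}) (hb₂ : b₂ = #{i | x i = 0 ∧ y i = 1})
    (hc : c = #{i | x i = 0 ∧ y i = 0}) (hsum : a₁ + a₂ + b₁ + b₂ + c = n)
    (q : ℤ → ℤ → ℤ → Prop) [∀ a b, DecidablePred (q a b)] :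
    #{s ∈ signVecs n | ∀ i, q (x i) (y i) (s i)} =
      #{e ∈ signs | q 1 1 e} ^ a₁ * #{e ∈ signs | q 1 (-1) e} ^ a₂ *
        #{e ∈ signs | q 1 0 e} ^ b₁ * #{e ∈ signs | q 0 1 e} ^ b₂ * #{e ∈ signs | q 0 0 e} ^ c := by
  have hT : ∑ p ∈ ({(1, 1), (1, -1), (1, 0), (0, 1), (0, 0)} : Finset (ℤ × ℤ)),
      #{i | (x i, y i) = p} = Fintype.card (Fin n) := by
    simp [Prod.ext_iff, ← ha₁, ← ha₂, ← hb₁, ← hb₂, ← hc, ← hsum, add_assoc]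
  rw [card_filter_signVecs_forall (fun i => q (x i) (y i)),
    prod_eq_prod_pow_card_fiber hT fun p => #{e ∈ signs | q p.1 p.2 e}]
  simp [Prod.ext_iff, ← ha₁, ← ha₂, ← hb₁, ← hb₂, ← hc, mul_assoc]

theorem stmt13_general {n : ℕ} (x y : Fin n → ℤ)
    (a₁ a₂ b₁ b₂ c : ℕ)
    (ha₁ : a₁ = (Finset.univ.filter (fun i => x i = 1 ∧ y i = 1)).card)
    (ha₂ : a₂ = (Finset.univ.filter (fun i => x i = 1 ∧ y i = -1)).card)
    (hb₁ : b₁ = (Finset.univ.filter (fun i => x i = 1 ∧ y i = 0)).card)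
    (hb₂ : b₂ = (Finset.univ.filter (fun i => x i = 0 ∧ y i = 1)).card)
    (hc : c = (Finset.univ.filter (fun i => x i = 0 ∧ y i = 0)).card)
    (hsum : a₁ + a₂ + b₁ + b₂ + c = n) :
    ((ZE {x, y}).ncard : ℤ) =
      3 ^ c * (3 ^ b₁ * 2 ^ (a₁ + a₂ + b₂) + 3 ^ b₂ * 2 ^ (a₁ + a₂ + b₁)
        - 2 ^ (b₁ + b₂) * (2 ^ a₁ + 2 ^ a₂)
        - 3 ^ b₁ - 3 ^ b₂ + 2 ^ (b₁ + 1) + 2 ^ (b₂ + 1) - 2) := by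
  classical
  have hZE := two_mul_ncard_ZE ({x, y} : Set (Fin n → ℤ))
  simp only [Set.mem_insert_iff, Set.mem_singleton_iff, exists_eq_or_imp, exists_eq_left] at hZE
  have hcols := card_filter_signVecs_of_columns ha₁ ha₂ hb₁ hb₂ hc hsum
  have hx (k : ℤ) := hcols fun a _ e => SignAgree k a e
  have hy (k : ℤ) := hcols fun _ b e => SignAgree k b e
  have hxy (k l : ℤ) := hcols fun a b e => SignAgree k a e ∧ SignAgree l b e
  have hcount := card_filter_eliminates_or x y
  simp only [hx, hy, hxy, card_filter, sum_signs, eliminationWeight] at hcount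
  norm_num [SignAgree] at hcount
  have h2 : (2 : ℤ) * (ZE {x, y}).ncard =
      #{s ∈ signVecs n | Eliminates x s ∨ Eliminates y s} := by exact_mod_cast hZE
  refine mul_left_cancel₀ (two_ne_zero (α := ℤ)) ?_
  rw [h2, hcount]
  ring

theorem stmt13 {n : ℕ} (x y : Fin n → ℤ) (hx : x ∈ ZS n) (hy : y ∈ ZS n) (hxy : x ≠ y)
    (a₁ a₂ b₁ b₂ c : ℕ)
    (ha₁ : a₁ = (Finset.univ.filter (fun i => x i = 1 ∧ y i = 1)).card)
    (ha₂ : a₂ = (Finset.univ.filter (fun i => x i = 1 ∧ y i = -1)).card)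
    (hb₁ : b₁ = (Finset.univ.filter (fun i => x i = 1 ∧ y i = 0)).card)
    (hb₂ : b₂ = (Finset.univ.filter (fun i => x i = 0 ∧ y i = 1)).card)
    (hc : c = (Finset.univ.filter (fun i => x i = 0 ∧ y i = 0)).card)
    (hsum : a₁ + a₂ + b₁ + b₂ + c = n) :
    ((ZE {x, y}).ncard : ℤ) =
      3 ^ c * (3 ^ b₁ * 2 ^ (a₁ + a₂ + b₂) + 3 ^ b₂ * 2 ^ (a₁ + a₂ + b₁)
        - 2 ^ (b₁ + b₂) * (2 ^ a₁ + 2 ^ a₂)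
        - 3 ^ b₁ - 3 ^ b₂ + 2 ^ (b₁ + 1) + 2 ^ (b₂ + 1) - 2) :=
  stmt13_general x y a₁ a₂ b₁ b₂ c ha₁ ha₂ hb₁ hb₂ hc hsum
end

section
/- The color gate φ̄ : (0,1)³ → ℝ⁴ defined by f₁ = (1-r)(1-g)(1-b), f₂ = r(1-g)(1-b) + ½r(1-g)b + ½rg(1-b) + ⅓rgb, f₃ = (1-r)g(1-b) + ½(1-r)gb + ½rg(1-b) + ⅓rgb, f₄ = (1-r)(1-g)b + ½(1-r)gb + ½r(1-g)b + ⅓rgb is injective on the open cube (0,1)³. -/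
/-- The color gate `φ̄`. -/
noncomputable def colorGate (p : Fin 3 → ℝ) : Fin 4 → ℝ :=
  ![(1 - p 0) * (1 - p 1) * (1 - p 2),
    p 0 * (1 - p 1) * (1 - p 2) + (1/2) * p 0 * (1 - p 1) * p 2
      + (1/2) * p 0 * p 1 * (1 - p 2) + (1/3) * p 0 * p 1 * p 2,
    (1 - p 0) * p 1 * (1 - p 2) + (1/2) * (1 - p 0) * p 1 * p 2
      + (1/2) * p 0 * p 1 * (1 - p 2) + (1/3) * p 0 * p 1 * p 2,
    (1 - p 0) * (1 - p 1) * p 2 + (1/2) * (1 - p 0) * p 1 * p 2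
      + (1/2) * p 0 * (1 - p 1) * p 2 + (1/3) * p 0 * p 1 * p 2]

private lemma lemS (a b c d e f : ℝ)
    (ha0 : 0 < a) (ha1 : a < 1) (hb0 : 0 < b) (hb1 : b < 1) (hc0 : 0 < c) (hc1 : c < 1)
    (hd0 : 0 < d) (hd1 : d < 1) (he0 : 0 < e) (he1 : e < 1) (hf0 : 0 < f) (hf1 : f < 1)
    (h1 : a ≤ d) (h2 : b ≤ e) (h3 : c ≤ f)
    (hE : (1-a)*(1-b)*(1-c) = (1-d)*(1-e)*(1-f)) :
    a = d ∧ b = e ∧ c = f := by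
  have P1 : (0:ℝ) < (1-e)*(1-f) := by nlinarith
  have P2 : (0:ℝ) < (1-a)*(1-f) := by nlinarith
  have P3 : (0:ℝ) < (1-a)*(1-b) := by nlinarith
  have k1 : 0 ≤ (d-a)*((1-e)*(1-f)) := mul_nonneg (by linarith) P1.le
  have k2 : 0 ≤ (e-b)*((1-a)*(1-f)) := mul_nonneg (by linarith) P2.le
  have k3 : 0 ≤ (f-c)*((1-a)*(1-b)) := mul_nonneg (by linarith) P3.le
  have key : (d-a)*((1-e)*(1-f)) + (e-b)*((1-a)*(1-f)) + (f-c)*((1-a)*(1-b)) = 0 := by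
    linear_combination hE
  refine ⟨le_antisymm h1 ?_, le_antisymm h2 ?_, le_antisymm h3 ?_⟩
  · nlinarith [P1, k2, k3, key]
  · nlinarith [P2, k1, k3, key]
  · nlinarith [P3, k1, k2, key]

private lemma lemT (a b c d e f : ℝ)
    (ha0 : 0 < a) (ha1 : a < 1) (hb0 : 0 < b) (hb1 : b < 1) (hc0 : 0 < c) (hc1 : c < 1)
    (hd0 : 0 < d) (hd1 : d < 1) (he0 : 0 < e) (he1 : e < 1) (hf0 : 0 < f) (hf1 : f < 1)
    (h1 : a ≤ d) (h2 : e ≤ b) (h3 : f ≤ c)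
    (hE : a - b - c + b*c - a*b*c/3 = d - e - f + e*f - d*e*f/3) :
    a = d ∧ b = e ∧ c = f := by
  have P1 : (0:ℝ) < 1 - e*f/3 := by nlinarith
  have P2 : (0:ℝ) < 1 - f + a*f/3 := by nlinarith
  have P3 : (0:ℝ) < 1 - b + a*b/3 := by nlinarith
  have k1 : 0 ≤ (d-a)*(1 - e*f/3) := mul_nonneg (by linarith) P1.le
  have k2 : 0 ≤ (b-e)*(1 - f + a*f/3) := mul_nonneg (by linarith) P2.le
  have k3 : 0 ≤ (c-f)*(1 - b + a*b/3) := mul_nonneg (by linarith) P3.le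
  have key : (d-a)*(1 - e*f/3) + (b-e)*(1 - f + a*f/3) + (c-f)*(1 - b + a*b/3) = 0 := by
    linear_combination -hE
  refine ⟨le_antisymm h1 ?_, le_antisymm ?_ h2, le_antisymm ?_ h3⟩
  · nlinarith [P1, k2, k3, key]
  · nlinarith [P2, k1, k3, key]
  · nlinarith [P3, k1, k2, key]

theorem stmt19 : Set.InjOn colorGate {p | ∀ i, p i ∈ Set.Ioo (0:ℝ) 1} := by
  intro p hp q hq h
  obtain ⟨ha0, ha1⟩ := hp 0
  obtain ⟨hb0, hb1⟩ := hp 1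
  obtain ⟨hc0, hc1⟩ := hp 2
  obtain ⟨hd0, hd1⟩ := hq 0
  obtain ⟨he0, he1⟩ := hq 1
  obtain ⟨hf0, hf1⟩ := hq 2
  have h1 : (1 - p 0) * (1 - p 1) * (1 - p 2) = (1 - q 0) * (1 - q 1) * (1 - q 2) := by
    simpa [colorGate] using congrFun h 0
  have h2 : p 0 * (1 - p 1) * (1 - p 2) + (1/2) * p 0 * (1 - p 1) * p 2
      + (1/2) * p 0 * p 1 * (1 - p 2) + (1/3) * p 0 * p 1 * p 2
      = q 0 * (1 - q 1) * (1 - q 2) + (1/2) * q 0 * (1 - q 1) * q 2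
      + (1/2) * q 0 * q 1 * (1 - q 2) + (1/3) * q 0 * q 1 * q 2 := by
    simpa [colorGate] using congrFun h 1
  have h3 : (1 - p 0) * p 1 * (1 - p 2) + (1/2) * (1 - p 0) * p 1 * p 2
      + (1/2) * p 0 * p 1 * (1 - p 2) + (1/3) * p 0 * p 1 * p 2
      = (1 - q 0) * q 1 * (1 - q 2) + (1/2) * (1 - q 0) * q 1 * q 2
      + (1/2) * q 0 * q 1 * (1 - q 2) + (1/3) * q 0 * q 1 * q 2 := by
    simpa [colorGate] using congrFun h 2
  have h4 : (1 - p 0) * (1 - p 1) * p 2 + (1/2) * (1 - p 0) * p 1 * p 2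
      + (1/2) * p 0 * (1 - p 1) * p 2 + (1/3) * p 0 * p 1 * p 2
      = (1 - q 0) * (1 - q 1) * q 2 + (1/2) * (1 - q 0) * q 1 * q 2
      + (1/2) * q 0 * (1 - q 1) * q 2 + (1/3) * q 0 * q 1 * q 2 := by
    simpa [colorGate] using congrFun h 3
  have hT : p 0 - p 1 - p 2 + p 1 * p 2 - p 0 * p 1 * p 2 / 3
      = q 0 - q 1 - q 2 + q 1 * q 2 - q 0 * q 1 * q 2 / 3 := by
    linear_combination h2 - h3 - h4
  have hU : p 1 - p 0 - p 2 + p 0 * p 2 - p 1 * p 0 * p 2 / 3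
      = q 1 - q 0 - q 2 + q 0 * q 2 - q 1 * q 0 * q 2 / 3 := by
    linear_combination h3 - h2 - h4
  have hV : p 2 - p 0 - p 1 + p 0 * p 1 - p 2 * p 0 * p 1 / 3
      = q 2 - q 0 - q 1 + q 0 * q 1 - q 2 * q 0 * q 1 / 3 := by
    linear_combination h4 - h2 - h3
  have key : p 0 = q 0 ∧ p 1 = q 1 ∧ p 2 = q 2 := by
    rcases le_total (p 0) (q 0) with s1 | s1 <;>
      rcases le_total (p 1) (q 1) with s2 | s2 <;>
      rcases le_total (p 2) (q 2) with s3 | s3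
    · exact lemS (p 0) (p 1) (p 2) (q 0) (q 1) (q 2)
        ha0 ha1 hb0 hb1 hc0 hc1 hd0 hd1 he0 he1 hf0 hf1 s1 s2 s3 h1
    · -- p0 ≤ q0, p1 ≤ q1, q2 ≤ p2 : V mirrored
      obtain ⟨e3, e1, e2⟩ := lemT (q 2) (q 0) (q 1) (p 2) (p 0) (p 1)
        hf0 hf1 hd0 hd1 he0 he1 hc0 hc1 ha0 ha1 hb0 hb1 s3 s1 s2 hV.symm
      exact ⟨e1.symm, e2.symm, e3.symm⟩
    · -- p0 ≤ q0, q1 ≤ p1, p2 ≤ q2 : U mirrored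
      obtain ⟨e2, e1, e3⟩ := lemT (q 1) (q 0) (q 2) (p 1) (p 0) (p 2)
        he0 he1 hd0 hd1 hf0 hf1 hb0 hb1 ha0 ha1 hc0 hc1 s2 s1 s3 hU.symm
      exact ⟨e1.symm, e2.symm, e3.symm⟩
    · -- p0 ≤ q0, q1 ≤ p1, q2 ≤ p2 : T
      obtain ⟨e1, e2, e3⟩ := lemT (p 0) (p 1) (p 2) (q 0) (q 1) (q 2)
        ha0 ha1 hb0 hb1 hc0 hc1 hd0 hd1 he0 he1 hf0 hf1 s1 s2 s3 hT
      exact ⟨e1, e2, e3⟩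
    · -- q0 ≤ p0, p1 ≤ q1, p2 ≤ q2 : T mirrored
      obtain ⟨e1, e2, e3⟩ := lemT (q 0) (q 1) (q 2) (p 0) (p 1) (p 2)
        hd0 hd1 he0 he1 hf0 hf1 ha0 ha1 hb0 hb1 hc0 hc1 s1 s2 s3 hT.symm
      exact ⟨e1.symm, e2.symm, e3.symm⟩
    · -- q0 ≤ p0, p1 ≤ q1, q2 ≤ p2 : U
      obtain ⟨e2, e1, e3⟩ := lemT (p 1) (p 0) (p 2) (q 1) (q 0) (q 2)
        hb0 hb1 ha0 ha1 hc0 hc1 he0 he1 hd0 hd1 hf0 hf1 s2 s1 s3 hU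
      exact ⟨e1, e2, e3⟩
    · -- q0 ≤ p0, q1 ≤ p1, p2 ≤ q2 : V
      obtain ⟨e3, e1, e2⟩ := lemT (p 2) (p 0) (p 1) (q 2) (q 0) (q 1)
        hc0 hc1 ha0 ha1 hb0 hb1 hf0 hf1 hd0 hd1 he0 he1 s3 s1 s2 hV
      exact ⟨e1, e2, e3⟩
    · obtain ⟨e1, e2, e3⟩ := lemS (q 0) (q 1) (q 2) (p 0) (p 1) (p 2)
        hd0 hd1 he0 he1 hf0 hf1 ha0 ha1 hb0 hb1 hc0 hc1 s1 s2 s3 h1.symm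
      exact ⟨e1.symm, e2.symm, e3.symm⟩
  funext i
  fin_cases i
  · exact key.1
  · exact key.2.1
  · exact key.2.2
end
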